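/- For every integer n ≥ 2, R̄(n+1; 2n−1) = 2n+1, where the first argument n+1 is repeated 2n−1 times. -/

import Mathlib

open Finset

/-- The color-`i` graph `f⁻¹(i)` of an edge `k`-coloring `f` of the complete
graph on `Fin n`. -/
def colorGraph {n k : ℕ} (f : Sym2 (Fin n) → Fin k) (i : Fin k) :
    SimpleGraph (Fin n) where
  Adj x y := x ≠ y ∧ f s(x, y) = i
  symm := by
    constructor
    rintro x y ⟨hxy, hf⟩
    exact ⟨hxy.symm, by rwa [Sym2.eq_swap]⟩
  loopless := by constructor; rintro x ⟨h, -⟩; exact h rfl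

/-- `α_i(f) ≥ m` : the graph `f⁻¹(i)` has an independent set of size `m`. -/
def HasIndep {n k : ℕ} (f : Sym2 (Fin n) → Fin k) (i : Fin k) (m : ℕ) : Prop :=
  ∃ s : Finset (Fin n), s.card = m ∧ ∀ x ∈ s, ∀ y ∈ s, x ≠ y → f s(x, y) ≠ i

/-- `ω_i(f) ≥ m` : the graph `f⁻¹(i)` has a clique of size `m`. -/
def HasClique {n k : ℕ} (f : Sym2 (Fin n) → Fin k) (i : Fin k) (m : ℕ) : Prop :=
  ∃ s : Finset (Fin n), s.card = m ∧ ∀ x ∈ s, ∀ y ∈ s, x ≠ y → f s(x, y) = i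

/-- The complementary Ramsey number `R̄(m 0, …, m (k-1))`: the least `n` such
that every edge `k`-coloring of `K_n` admits a color `i` with `α_i(f) ≥ m i`. -/
noncomputable def cRamsey {k : ℕ} (m : Fin k → ℕ) : ℕ :=
  sInf {n : ℕ | ∀ f : Sym2 (Fin n) → Fin k, ∃ i : Fin k, HasIndep f i (m i)}

/-- `R̄(m; k)`, i.e. `R̄(m, …, m)` with `m` repeated `k` times. -/
noncomputable def cRamseyU (m k : ℕ) : ℕ := cRamsey (fun _ : Fin k => m)

/-- The classical multicolor Ramsey number `R(m 0, …, m (k-1))`. -/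
noncomputable def ramsey {k : ℕ} (m : Fin k → ℕ) : ℕ :=
  sInf {n : ℕ | ∀ f : Sym2 (Fin n) → Fin k, ∃ i : Fin k, HasClique f i (m i)}

/-- `G` is the disjoint union of `r` copies of `K_{q+1}` and `n - r` copies of
`K_q`: there is a partition of the vertices into `n` parts, `r` of size `q+1`
and `n - r` of size `q`, with two vertices adjacent iff they are distinct and
lie in a common part. -/
def IsCliquePartition {N : ℕ} (G : SimpleGraph (Fin N)) (n q r : ℕ) : Prop :=
  ∃ P : Fin N → Fin n,
    (∀ x y, G.Adj x y ↔ x ≠ y ∧ P x = P y) ∧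
    ∀ j : Fin n,
      (Finset.univ.filter (fun x => P x = j)).card = if (j : ℕ) < r then q + 1 else q

/-- The family `H` of spanning subgraphs is a factorization of the complete
graph: every edge of `K_N` lies in exactly one of the `H i`. -/
def IsFactorization {N k : ℕ} (H : Fin k → SimpleGraph (Fin N)) : Prop :=
  ∀ x y : Fin N, x ≠ y → ∃! i : Fin k, (H i).Adj x y

/-- `f_i(x)`: the number of vertices `y ≠ x` with `f({x, y}) = i`. -/
def degColor {n k : ℕ} (f : Sym2 (Fin n) → Fin k) (i : Fin k) (x : Fin n) : ℕ :=
  (Finset.univ.filter (fun y => y ≠ x ∧ f s(x, y) = i)).card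

/-- `t̄_n(m)`: the number of edges of `T̄_n(m) = r K_{q+1} ∪ (n-r) K_q`, where
`m = n * q + r` with `0 ≤ r < n`. -/
def tbar (n m : ℕ) : ℕ :=
  (m % n) * Nat.choose (m / n + 1) 2 + (n - m % n) * Nat.choose (m / n) 2

/-!
Upper bound: if no color class of a `(2n-1)`-coloring of `K_{2n+1}` had `n+1` independent
vertices, each class would have at least `n+2` edges (a maximum independent set `S`
dominates the `≥ n+1` remaining vertices, and those are not independent themselves), so
`K_{2n+1}` would have at least `(2n-1)(n+2) > n(2n+1)` edges.

Lower bound: the round-robin one-factorization of `K_{2n}` colors each edge with one of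
`2n-1` colors so that every color class is a perfect matching, whose independent sets have
at most `n` vertices.
-/

namespace SimpleGraph

variable {V : Type*} [Fintype V] [DecidableEq V] {G : SimpleGraph V}

theorem IsMaximumIndepSet.exists_adj_of_notMem {s : Finset V} (hs : G.IsMaximumIndepSet s)
    {v : V} (hv : v ∉ s) : ∃ u ∈ s, G.Adj v u := by
  by_contra! hnone
  have hins : G.IsIndepSet (insert v s : Finset V) := by
    rw [coe_insert]
    exact hs.isIndepSet.insert fun u hu _ => ⟨hnone u hu, fun h => hnone u hu h.symm⟩
  have := hs.maximum _ hins
  rw [card_insert_of_notMem hv] at this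
  omega

theorem card_add_one_le_card_edgeFinset_add_indepNum (G : SimpleGraph V) [DecidableRel G.Adj]
    (h : 2 * G.indepNum < Fintype.card V) :
    Fintype.card V + 1 ≤ #G.edgeFinset + G.indepNum := by
  obtain ⟨s, hs⟩ := G.maximumIndepSet_exists
  rw [← G.maximumIndepSet_card_eq_indepNum s hs] at h ⊢
  choose! g hgs hgadj using fun v => hs.exists_adj_of_notMem (v := v)
  obtain ⟨v, hv, w, hw, hadj⟩ : ∃ v ∈ sᶜ, ∃ w ∈ sᶜ, G.Adj v w := by
    by_contra! hind
    have := hs.maximum sᶜ fun v hv w hw _ => hind v hv w hw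
    rw [card_compl] at this
    omega
  have hinj : Set.InjOn (fun u => s(u, g u)) (sᶜ : Finset V) := by
    intro a ha b hb hab
    rw [coe_compl, Set.mem_compl_iff, mem_coe] at ha hb
    rcases Sym2.eq_iff.1 hab with ⟨h, -⟩ | ⟨h, -⟩
    · exact h
    · exact absurd (h ▸ hgs b hb) ha
  have hnew : s(v, w) ∉ sᶜ.image fun u => s(u, g u) := by
    simp only [mem_image, not_exists, not_and]
    intro u hu heq
    rcases Sym2.eq_iff.1 heq with ⟨-, h⟩ | ⟨-, h⟩
    · exact mem_compl.1 hw (h ▸ hgs u (mem_compl.1 hu))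
    · exact mem_compl.1 hv (h ▸ hgs u (mem_compl.1 hu))
  have hsub : insert s(v, w) (sᶜ.image fun u => s(u, g u)) ⊆ G.edgeFinset := by
    intro e he
    rcases mem_insert.1 he with rfl | he
    · simpa using hadj
    · obtain ⟨u, hu, rfl⟩ := mem_image.1 he
      simpa using hgadj u (mem_compl.1 hu)
  calc Fintype.card V + 1
        = #(insert s(v, w) (sᶜ.image fun u => s(u, g u))) + #s := by
        rw [card_insert_of_notMem hnew, card_image_of_injOn hinj, card_compl]
        have := card_le_univ s
        omega
    _ ≤ #G.edgeFinset + #s := Nat.add_le_add_right (card_le_card hsub) _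

end SimpleGraph

theorem two_mul_card_le_card_of_involutive {α : Type*} [Fintype α] [DecidableEq α] {μ : α → α}
    (hμ : Function.Involutive μ) {s : Finset α} (hs : ∀ x ∈ s, μ x ∉ s) :
    2 * #s ≤ Fintype.card α := by
  have hdisj : Disjoint s (s.image μ) := by
    rw [disjoint_right]
    rintro _ hy hys
    obtain ⟨x, hx, rfl⟩ := mem_image.1 hy
    exact hs x hx hys
  calc 2 * #s = #(s ∪ s.image μ) := by
        rw [card_union_of_disjoint hdisj, card_image_of_injective _ hμ.injective]; ring
    _ ≤ Fintype.card α := card_le_univ _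

section colorGraph

variable {N k : ℕ}

instance (f : Sym2 (Fin N) → Fin k) (i : Fin k) : DecidableRel (colorGraph f i).Adj :=
  fun x y => inferInstanceAs (Decidable (x ≠ y ∧ f s(x, y) = i))

theorem sum_card_edgeFinset_colorGraph (f : Sym2 (Fin N) → Fin k) :
    ∑ i, #(colorGraph f i).edgeFinset = N.choose 2 := by
  have htop := SimpleGraph.card_edgeFinset_top_eq_card_choose_two (V := Fin N)
  rw [Fintype.card_fin, card_eq_sum_card_fiberwise (f := f) (t := univ)
    fun _ _ => mem_coe.2 (mem_univ _)] at htop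
  rw [← htop]
  refine sum_congr rfl fun i _ => congrArg card ?_
  ext e
  induction e using Sym2.ind with
  | h x y =>
    simp only [mem_filter, SimpleGraph.mem_edgeFinset, SimpleGraph.mem_edgeSet,
      SimpleGraph.top_adj]
    rfl

theorem indepNum_colorGraph_lt {f : Sym2 (Fin N) → Fin k} {i : Fin k} {m : ℕ}
    (h : ¬ HasIndep f i m) : (colorGraph f i).indepNum < m := by
  by_contra! hm
  obtain ⟨s, hs⟩ := (colorGraph f i).exists_isNIndepSet_indepNum
  obtain ⟨t, hts, ht⟩ := exists_subset_card_eq (hs.card_eq ▸ hm)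
  exact h ⟨t, ht, fun x hx y hy hxy hf => hs.isIndepSet (hts hx) (hts hy) hxy ⟨hxy, hf⟩⟩

end colorGraph

theorem exists_hasIndep_of_two_le {n : ℕ} (hn : 2 ≤ n)
    (f : Sym2 (Fin (2 * n + 1)) → Fin (2 * n - 1)) :
    ∃ i, HasIndep f i (n + 1) := by
  by_contra! h
  have hclass : ∀ i, n + 2 ≤ #(colorGraph f i).edgeFinset := fun i => by
    have hα := Nat.lt_succ_iff.1 (indepNum_colorGraph_lt (h i))
    have := (colorGraph f i).card_add_one_le_card_edgeFinset_add_indepNum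
      (by rw [Fintype.card_fin]; omega)
    rw [Fintype.card_fin] at this
    omega
  have htotal : (2 * n - 1) * (n + 2) ≤ (2 * n + 1).choose 2 := by
    simpa [← sum_card_edgeFinset_colorGraph f] using sum_le_sum fun i (_ : i ∈ univ) => hclass i
  have hchoose : (2 * n + 1).choose 2 = n * (2 * n + 1) := by
    rw [Nat.choose_two_right, Nat.add_sub_cancel, mul_comm, mul_assoc,
      Nat.mul_div_cancel_left _ two_pos]
  obtain ⟨k, rfl⟩ : ∃ k, n = k + 2 := ⟨n - 2, by omega⟩
  rw [hchoose, show 2 * (k + 2) - 1 = 2 * k + 3 by omega] at htotal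
  nlinarith

section RoundRobin

variable {R : Type*} [CommRing R]

/-- The round-robin coloring of the complete graph on `R ∪ {∞}`, with `none` as `∞`. -/
def roundRobin : Sym2 (Option R) → R :=
  Sym2.lift ⟨fun
    | some x, some y => x + y
    | some x, none => 2 * x
    | none, some y => 2 * y
    | none, none => 0,
    by rintro (_ | x) (_ | y) <;> simp [add_comm]⟩

variable [Invertible (2 : R)] [DecidableEq R]

def roundRobinPartner (i : R) : Option R → Option R
  | none => some (⅟2 * i)
  | some x => if 2 * x = i then none else some (i - x)

theorem roundRobinPartner_ne (i : R) (v : Option R) : roundRobinPartner i v ≠ v := by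
  rcases v with _ | x
  · simp [roundRobinPartner]
  · by_cases hx : 2 * x = i
    · simp [roundRobinPartner, hx]
    · simp only [roundRobinPartner, hx, if_false, ne_eq, Option.some.injEq]
      intro h
      exact hx (by linear_combination -h)

theorem roundRobinPartner_involutive (i : R) : Function.Involutive (roundRobinPartner i) := by
  rintro (_ | x)
  · simp [roundRobinPartner]
  · by_cases hx : 2 * x = i
    · subst hx
      simp [roundRobinPartner]
    · have hx' : ¬ 2 * (i - x) = i := fun h => hx (by linear_combination -h)
      simp [roundRobinPartner, hx, hx']

theorem roundRobin_partner (i : R) (v : Option R) :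
    roundRobin s(v, roundRobinPartner i v) = i := by
  rcases v with _ | x
  · simp [roundRobin, roundRobinPartner, ← mul_assoc]
  · by_cases hx : 2 * x = i <;> simp [roundRobin, roundRobinPartner, hx]

theorem two_mul_card_le_of_pairwise_roundRobin_ne [Fintype R] {i : R} {s : Finset (Option R)}
    (hs : (s : Set (Option R)).Pairwise fun x y => roundRobin s(x, y) ≠ i) :
    2 * #s ≤ Fintype.card R + 1 := by
  rw [← Fintype.card_option]
  refine two_mul_card_le_card_of_involutive (roundRobinPartner_involutive i) fun x hx hpx => ?_
  exact hs hx hpx (roundRobinPartner_ne i x).symm (roundRobin_partner i x)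

end RoundRobin

theorem two_mul_natCast_eq_one {n : ℕ} (hn : 0 < n) : (2 : ZMod (2 * n - 1)) * n = 1 := by
  have h : ((2 * n - 1 : ℕ) : ZMod (2 * n - 1)) = 0 := ZMod.natCast_self _
  rw [Nat.cast_sub (by omega)] at h
  push_cast at h
  linear_combination h

theorem exists_forall_not_hasIndep {n m : ℕ} (hn : 0 < n) (hm : m ≤ 2 * n) :
    ∃ f : Sym2 (Fin m) → Fin (2 * n - 1), ∀ i, ¬ HasIndep f i (n + 1) := by
  have : NeZero (2 * n - 1) := ⟨by omega⟩
  let : Invertible (2 : ZMod (2 * n - 1)) :=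
    invertibleOfRightInverse _ _ (two_mul_natCast_eq_one hn)
  obtain ⟨φ⟩ : Nonempty (Fin m ↪ Option (ZMod (2 * n - 1))) :=
    Function.Embedding.nonempty_of_card_le <| by
      simp only [Fintype.card_fin, Fintype.card_option, ZMod.card]
      omega
  let σ : ZMod (2 * n - 1) ≃ Fin (2 * n - 1) := (ZMod.finEquiv (2 * n - 1)).symm.toEquiv
  refine ⟨fun e => σ (roundRobin (e.map φ)), fun i ⟨s, hcard, hs⟩ => ?_⟩
  have hind : ((s.map φ : Finset _) : Set (Option (ZMod (2 * n - 1)))).Pairwise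
      fun x y => roundRobin s(x, y) ≠ σ.symm i := by
    rw [coe_map, φ.injective.injOn.pairwise_image]
    intro x hx y hy hxy h
    exact hs x hx y hy hxy (σ.symm_apply_eq.1 h.symm).symm
  have := two_mul_card_le_of_pairwise_roundRobin_ne hind
  rw [card_map, hcard, ZMod.card] at this
  omega

theorem cRamsey_eq_of_hasIndep_of_lt {k N : ℕ} {m : Fin k → ℕ}
    (hN : ∀ f : Sym2 (Fin N) → Fin k, ∃ i, HasIndep f i (m i))
    (hlt : ∀ M < N, ∃ f : Sym2 (Fin M) → Fin k, ∀ i, ¬ HasIndep f i (m i)) :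
    cRamsey m = N := by
  refine le_antisymm (Nat.sInf_le hN) (le_csInf ⟨N, hN⟩ fun M hM => ?_)
  by_contra! h
  obtain ⟨f, hf⟩ := hlt M h
  obtain ⟨i, hi⟩ := hM f
  exact hf i hi

/-- For every integer `n ≥ 2`, `R̄(n + 1; 2n - 1) = 2n + 1`. -/
theorem cRamseyU_one_factorization (n : ℕ) (hn : 2 ≤ n) :
    cRamseyU (n + 1) (2 * n - 1) = 2 * n + 1 :=
  cRamsey_eq_of_hasIndep_of_lt (exists_hasIndep_of_two_le hn)
    fun _ hm => exists_forall_not_hasIndep (by omega) (by omega)
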